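/- Let p be an odd prime and let u0, u1, u2, u3 be squarefree integers with p | u0, p ∤ u1*u2*u3, and -u2*u3 not a square modulo p. If (x0,x1,x2,x3) ∈ Z_p^4 satisfies u0*u2*x0^2 + u1*u3*x1^2 + u0*u3*x2^2 + u1*u2*x3^2 = 0, then p divides all of x0, x1, x2, x3 in Z_p (so the solution is imprimitive). -/

import Mathlib

/-!
Reducing the equation modulo `p` kills the two terms carrying `u0` and leaves
`u1 (u3 x1² + u2 x3²) ≡ 0`. A binary form `a X² + b Y²` over a field has only the trivial zero
when `-ab` is not a square, so `p ∣ x1, x3`. Writing `u0 = p v`, the equation becomes divisible by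
`p` exactly once — squarefreeness of `u0` makes `v` a unit mod `p` — and after cancelling `p` the same
argument applied to `v (u2 x0² + u3 x2²)` gives `p ∣ x0, x2`.
-/

theorem eq_zero_of_mul_sq_add_mul_sq_eq_zero {K : Type*} [Field K] {a b x y : K}
    (hab : ¬IsSquare (-(a * b))) (h : a * x ^ 2 + b * y ^ 2 = 0) : x = 0 ∧ y = 0 := by
  have ha : a ≠ 0 := by rintro rfl; exact hab ⟨0, by simp⟩
  have hy : y = 0 := by
    by_contra hy
    refine hab ⟨a * x / y, ?_⟩
    rw [div_mul_div_comm, eq_div_iff (mul_ne_zero hy hy)]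
    linear_combination (-a) * h
  subst hy
  refine ⟨?_, rfl⟩
  simpa [ha] using h

theorem Int.not_dvd_of_squarefree_of_eq_mul {p : ℕ} (hp : p.Prime) {u v : ℤ}
    (hu : Squarefree u) (huv : u = p * v) : ¬(p : ℤ) ∣ v := by
  intro hv
  rw [huv, squarefree_mul_iff] at hu
  exact (Nat.prime_iff_prime_int.mp hp).not_isUnit (hu.1 dvd_rfl hv)

namespace PadicInt

variable {p : ℕ} [Fact p.Prime]

theorem toZMod_eq_zero_iff_dvd (z : ℤ_[p]) : toZMod z = 0 ↔ (p : ℤ_[p]) ∣ z := by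
  rw [← RingHom.mem_ker, ker_toZMod, maximalIdeal_eq_span_p, Ideal.mem_span_singleton]

theorem dvd_of_dvd_mul_mul_sq_add_mul_sq {a b c : ℤ} (hc : ¬(p : ℤ) ∣ c)
    (hab : ¬IsSquare ((-(a * b) : ℤ) : ZMod p)) {x y : ℤ_[p]}
    (h : (p : ℤ_[p]) ∣ c * (a * x ^ 2 + b * y ^ 2)) : (p : ℤ_[p]) ∣ x ∧ (p : ℤ_[p]) ∣ y := by
  rw [← toZMod_eq_zero_iff_dvd] at h
  simp only [map_mul, map_add, map_pow, map_intCast] at h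
  have hc' : (c : ZMod p) ≠ 0 := by rwa [Ne, ZMod.intCast_zmod_eq_zero_iff_dvd]
  push_cast at hab
  simpa only [toZMod_eq_zero_iff_dvd] using
    eq_zero_of_mul_sq_add_mul_sq_eq_zero hab ((mul_eq_zero.mp h).resolve_left hc')

end PadicInt

theorem stmt_1_general (p : ℕ) [Fact p.Prime]
    (u0 u1 u2 u3 : ℤ)
    (h0 : Squarefree u0)
    (hdvd : (p : ℤ) ∣ u0) (hndvd : ¬ (p : ℤ) ∣ u1 * u2 * u3)
    (hns : ¬ IsSquare ((-(u2 * u3) : ℤ) : ZMod p))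
    (x : Fin 4 → ℤ_[p])
    (hx : ((u0 * u2 : ℤ) : ℤ_[p]) * (x 0) ^ 2 + ((u1 * u3 : ℤ) : ℤ_[p]) * (x 1) ^ 2 +
        ((u0 * u3 : ℤ) : ℤ_[p]) * (x 2) ^ 2 + ((u1 * u2 : ℤ) : ℤ_[p]) * (x 3) ^ 2 = 0) :
    ∀ i, (p : ℤ_[p]) ∣ x i := by
  obtain ⟨v, rfl⟩ := hdvd
  have hv : ¬(p : ℤ) ∣ v := Int.not_dvd_of_squarefree_of_eq_mul Fact.out h0 rfl
  have hu1 : ¬(p : ℤ) ∣ u1 := fun h ↦ hndvd (dvd_mul_of_dvd_left (dvd_mul_of_dvd_left h _) _)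
  obtain ⟨⟨y3, hy3⟩, ⟨y1, hy1⟩⟩ : (p : ℤ_[p]) ∣ x 3 ∧ (p : ℤ_[p]) ∣ x 1 := by
    refine PadicInt.dvd_of_dvd_mul_mul_sq_add_mul_sq hu1 hns ⟨-(v * (u2 * x 0 ^ 2 + u3 * x 2 ^ 2)), ?_⟩
    push_cast at hx
    linear_combination hx
  have hcancel : (p : ℤ_[p]) * (v * (u2 * x 0 ^ 2 + u3 * x 2 ^ 2) +
      p * (u1 * (u3 * y1 ^ 2 + u2 * y3 ^ 2))) = 0 := by
    rw [hy1, hy3] at hx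
    push_cast at hx
    linear_combination hx
  obtain ⟨hx0, hx2⟩ : (p : ℤ_[p]) ∣ x 0 ∧ (p : ℤ_[p]) ∣ x 2 := by
    refine PadicInt.dvd_of_dvd_mul_mul_sq_add_mul_sq hv hns ⟨-(u1 * (u3 * y1 ^ 2 + u2 * y3 ^ 2)), ?_⟩
    have hp : (p : ℤ_[p]) ≠ 0 := Nat.cast_ne_zero.mpr (Fact.out : p.Prime).ne_zero
    linear_combination (mul_eq_zero.mp hcancel).resolve_left hp
  intro i
  fin_cases i
  exacts [hx0, ⟨y1, hy1⟩, hx2, ⟨y3, hy3⟩]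

/-- Any `ℤ_p`-solution of the quadric is imprimitive: `p` divides every coordinate. -/
theorem stmt_1 (p : ℕ) [Fact p.Prime] (hodd : p ≠ 2)
    (u0 u1 u2 u3 : ℤ)
    (h0 : Squarefree u0) (h1 : Squarefree u1) (h2 : Squarefree u2) (h3 : Squarefree u3)
    (hdvd : (p : ℤ) ∣ u0) (hndvd : ¬ (p : ℤ) ∣ u1 * u2 * u3)
    (hns : ¬ IsSquare ((-(u2 * u3) : ℤ) : ZMod p))
    (x : Fin 4 → ℤ_[p])
    (hx : ((u0 * u2 : ℤ) : ℤ_[p]) * (x 0) ^ 2 + ((u1 * u3 : ℤ) : ℤ_[p]) * (x 1) ^ 2 +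
        ((u0 * u3 : ℤ) : ℤ_[p]) * (x 2) ^ 2 + ((u1 * u2 : ℤ) : ℤ_[p]) * (x 3) ^ 2 = 0) :
    ∀ i, (p : ℤ_[p]) ∣ x i :=
  stmt_1_general p u0 u1 u2 u3 h0 hdvd hndvd hns x hx
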